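/- For each n with 1 ≤ n ≤ 4, the minimum length of a superpermutation on n symbols is exactly ∑_{i=1}^{n} i!. -/

import Mathlib

/-!
Upper bounds: explicit superpermutations of lengths 1, 3, 9 and 33.

Lower bounds: order the permutations by their first occurrences in a superpermutation `w`. If `τ`
first occurs `d > 0` places after `σ`, then `σ.drop d` is a prefix of `τ`, so `d` is at least the
overlap cost of `(σ, τ)`; hence `|w| ≥ n + c(P)` for the cost `c(P)` of some Hamiltonian path `P`
of the overlap graph. A step of cost `1` passes to the next rotation of the same permutation, so a
path through `m` vertices meeting `k` rotation classes costs at least `m + k - 2`. A branch and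
bound search pruned by this estimate shows that every Hamiltonian path costs at least `1`, `6`,
`29` for `n = 2, 3, 4`.
-/

/-- A superpermutation on `n` symbols: a word over `Fin n` containing every
permutation of `Fin n` (viewed as the word `σ 0, σ 1, …, σ (n-1)`) as a
contiguous substring (infix). -/
def IsSuperperm (n : ℕ) (w : List (Fin n)) : Prop :=
  ∀ σ : Equiv.Perm (Fin n), List.ofFn ⇑σ <:+: w

open scoped List

section Overlap

variable {α : Type*} [DecidableEq α]

/-- The least `d ≥ 1` such that `u.drop d` is a prefix of `v`. -/
def overlapCost : List α → List α → ℕ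
  | [], _ => 1
  | _ :: s, v => if s <+: v then 1 else overlapCost s v + 1

theorem one_le_overlapCost (u v : List α) : 1 ≤ overlapCost u v := by
  cases u with
  | nil => exact le_rfl
  | cons _ s => rw [overlapCost]; split_ifs <;> omega

theorem overlapCost_le {u v : List α} {d : ℕ} (hd : 1 ≤ d) (h : u.drop d <+: v) :
    overlapCost u v ≤ d := by
  induction u generalizing d with
  | nil => exact hd
  | cons a s ih =>
    unfold overlapCost
    split_ifs with hs
    · exact hd
    · obtain _ | _ | d := d
      · omega
      · exact absurd h hs
      · exact Nat.succ_le_succ (ih (Nat.le_add_left 1 d) h)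

theorem drop_one_prefix_of_overlapCost_eq_one {u v : List α} (h : overlapCost u v = 1) :
    u.drop 1 <+: v := by
  cases u with
  | nil => exact List.nil_prefix
  | cons a s =>
    unfold overlapCost at h
    split_ifs at h with hs
    · exact hs
    · have := one_le_overlapCost s v
      omega

theorem isRotated_of_overlapCost_eq_one {u v : List α} (huv : u ~ v) (hv : v.Nodup)
    (h : overlapCost u v = 1) : u ~r v := by
  cases u with
  | nil => rw [List.nil_perm.1 huv]
  | cons a s =>
    have hs : s <+: v := drop_one_prefix_of_overlapCost_eq_one h
    obtain ⟨t, rfl⟩ := hs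
    obtain ⟨b, rfl⟩ : ∃ b, t = [b] := by
      have := huv.length_eq
      simp only [List.length_cons, List.length_append] at this
      exact List.length_eq_one_iff.1 (by omega)
    have has : a ∉ s := (List.nodup_cons.1 (huv.nodup_iff.2 hv)).1
    have hab : a = b := by simpa [has] using huv.subset (List.mem_cons_self (a := a) (l := s))
    subst hab
    exact ⟨1, by simp [List.rotate_cons_succ]⟩

theorem overlapCost_take_drop_le (w : List α) (n : ℕ) {i j : ℕ} (hij : i < j) :
    overlapCost ((w.drop i).take n) ((w.drop j).take n) ≤ j - i := by
  apply overlapCost_le (by omega)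
  rw [List.drop_take, List.drop_drop, Nat.add_sub_cancel' hij.le]
  exact List.take_prefix_take_left (Nat.sub_le _ _)

end Overlap

section Path

variable {α β : Type*}

def pathCost (c : α → α → ℕ) : List α → ℕ
  | [] => 0
  | [_] => 0
  | a :: b :: l => c a b + pathCost c (b :: l)

theorem pathCost_map {γ : Type*} (c : α → α → ℕ) (f : γ → α) :
    ∀ l : List γ, pathCost c (l.map f) = pathCost (fun a b => c (f a) (f b)) l
  | [] => rfl
  | [_] => rfl
  | a :: b :: l => congrArg (c (f a) (f b) + ·) (pathCost_map c f (b :: l))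

theorem pathCost_add_le {c : ℕ → ℕ → ℕ} (hc : ∀ i j, i < j → c i j ≤ j - i) {M : ℕ} :
    ∀ {i : ℕ} {P : List ℕ}, (i :: P).Pairwise (· < ·) → (∀ j ∈ i :: P, j ≤ M) →
      pathCost c (i :: P) + i ≤ M
  | i, [], _, hM => by simpa [pathCost] using hM i List.mem_cons_self
  | i, j :: P, hP, hM => by
    have hij : i < j := List.rel_of_pairwise_cons hP List.mem_cons_self
    have ih := pathCost_add_le hc hP.of_cons fun k hk => hM k (List.mem_cons_of_mem _ hk)
    have := hc i j hij
    simp only [pathCost]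
    omega

theorem length_add_card_le_pathCost [DecidableEq β] {c : α → α → ℕ} {κ : α → β}
    (h1 : ∀ a b, 1 ≤ c a b) :
    ∀ l : List α, (∀ a ∈ l, ∀ b ∈ l, c a b = 1 → κ a = κ b) →
      l.length + (l.map κ).toFinset.card ≤ pathCost c l + 2
  | [], _ => by simp
  | [_], _ => by simp [pathCost]
  | a :: b :: l, hκ => by
    have ih := length_add_card_le_pathCost h1 (b :: l) fun x hx y hy =>
      hκ x (List.mem_cons_of_mem _ hx) y (List.mem_cons_of_mem _ hy)
    have hc := h1 a b
    simp only [pathCost, List.map_cons, List.toFinset_cons, List.length_cons] at *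
    by_cases ha : κ a ∈ insert (κ b) (l.map κ).toFinset
    · rw [Finset.insert_eq_of_mem ha]
      omega
    · have : c a b ≠ 1 := fun h => ha (hκ a (by simp) b (by simp) h ▸ Finset.mem_insert_self _ _)
      rw [Finset.card_insert_of_notMem ha]
      omega

variable [DecidableEq α] [DecidableEq β]

/-- Branch and bound: with enough `fuel`, returns `true` whenever some ordering `l` of `rest` has
`pathCost c (p :: l) ≤ b`; branches are pruned by `length_add_card_le_pathCost`. -/
def pathSearch (c : α → α → ℕ) (κ : α → β) : ℕ → α → List α → ℕ → Bool
  | 0, _, rest, _ => rest.isEmpty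
  | fuel + 1, p, rest, b =>
    rest.isEmpty ||
      (decide (rest.length + (rest.map κ).toFinset.card ≤ b + 1) &&
        rest.any fun q => decide (c p q ≤ b) && pathSearch c κ fuel q (rest.erase q) (b - c p q))

theorem pathSearch_eq_true {c : α → α → ℕ} {κ : α → β} (h1 : ∀ a b, 1 ≤ c a b) :
    ∀ {fuel : ℕ} {p : α} {l rest : List α} {b : ℕ},
      (∀ x ∈ p :: l, ∀ y ∈ p :: l, c x y = 1 → κ x = κ y) → l ~ rest → l.length ≤ fuel →
      pathCost c (p :: l) ≤ b → pathSearch c κ fuel p rest b = true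
  | fuel, _, [], _, _, _, hl, _, _ => by rw [List.nil_perm.1 hl]; cases fuel <;> rfl
  | fuel + 1, p, q :: l, rest, b, hκ, hl, hlen, hb => by
    have hstep : pathCost c (p :: q :: l) = c p q + pathCost c (q :: l) := rfl
    have hclasses := length_add_card_le_pathCost h1 (p :: q :: l) hκ
    have hsub := Finset.card_le_card
      (Finset.subset_insert (κ p) ((q :: l).map κ).toFinset)
    have hrest := pathSearch_eq_true (fuel := fuel) (p := q) (l := l) (rest := rest.erase q)
      (b := b - c p q) (h1 := h1)
      (fun x hx y hy => hκ x (List.mem_cons_of_mem _ hx) y (List.mem_cons_of_mem _ hy))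
      (by simpa using hl.erase q) (by simpa using hlen) (by omega)
    simp only [pathSearch, Bool.or_eq_true, Bool.and_eq_true, decide_eq_true_eq, List.any_eq_true]
    refine Or.inr ⟨?_, q, hl.subset List.mem_cons_self, by omega, hrest⟩
    rw [← List.toFinset_eq_of_perm _ _ (hl.map κ), ← hl.length_eq]
    simp only [List.map_cons, List.toFinset_cons, List.length_cons] at *
    omega

def hamiltonianPathSearch (c : α → α → ℕ) (κ : α → β) (S : List α) (B : ℕ) : Bool :=
  S.any fun u => pathSearch c κ S.length u (S.erase u) B

theorem lt_pathCost_of_hamiltonianPathSearch {c : α → α → ℕ} {κ : α → β}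
    (h1 : ∀ a b, 1 ≤ c a b) {S : List α} (hκ : ∀ x ∈ S, ∀ y ∈ S, c x y = 1 → κ x = κ y)
    {B : ℕ} (hS : hamiltonianPathSearch c κ S B = false)
    {l : List α} (hl : l ~ S) (hne : l ≠ []) : B < pathCost c l := by
  obtain ⟨p, t, rfl⟩ := List.exists_cons_of_ne_nil hne
  have hp : p ∈ S := hl.subset List.mem_cons_self
  by_contra! hB
  have := pathSearch_eq_true (fuel := S.length) h1
    (fun x hx y hy => hκ x (hl.subset hx) y (hl.subset hy))
    (hl.trans (List.perm_cons_erase hp)).cons_inv (by simp [← hl.length_eq]) hB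
  simp only [hamiltonianPathSearch, List.any_eq_false] at hS
  simp [hS p hp] at this

end Path

section Occurrences

variable {α : Type*}

theorem exists_take_drop_eq_of_isInfix {u w : List α} (h : u <:+: w) :
    ∃ i, i + u.length ≤ w.length ∧ (w.drop i).take u.length = u := by
  obtain ⟨s, t, rfl⟩ := h
  exact ⟨s.length, by simp, by simp⟩

theorem exists_perm_add_pathCost_le [DecidableEq α] {w : List α} {n : ℕ} {S : List (List α)}
    (hS : S.Nodup) (hne : S ≠ []) (hlen : ∀ u ∈ S, u.length = n) (hw : ∀ u ∈ S, u <:+: w) :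
    ∃ l, l ~ S ∧ n + pathCost overlapCost l ≤ w.length := by
  have hocc : ∀ u ∈ S, ∃ i, i + n ≤ w.length ∧ (w.drop i).take n = u := fun u hu =>
    hlen u hu ▸ exists_take_drop_eq_of_isInfix (hw u hu)
  choose! pos hfit hpos using hocc
  set word : ℕ → List α := fun i => (w.drop i).take n
  set P := (S.map pos).mergeSort fun i j => decide (i ≤ j)
  have hPperm : P ~ S.map pos := List.mergeSort_perm _ _
  have hPfit : ∀ j ∈ P, j + n ≤ w.length := fun j hj => by
    obtain ⟨u, hu, rfl⟩ := List.mem_map.1 (hPperm.subset hj)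
    exact hfit u hu
  have hPnodup : P.Nodup := hPperm.nodup_iff.2 <|
    hS.map_on fun u hu v hv h => (hpos u hu).symm.trans (h ▸ hpos v hv)
  have hPsorted : P.Pairwise (· < ·) :=
    ((List.pairwise_mergeSort (by simp; omega) (by simp; omega) _).and hPnodup).imp
      fun h => lt_of_le_of_ne (by simpa using h.1) h.2
  have hword : P.map word ~ S := by
    have hS' : S.map (word ∘ pos) = S :=
      (List.map_congr_left fun u hu => hpos u hu).trans (List.map_id S)
    simpa only [List.map_map, hS'] using hPperm.map word
  refine ⟨P.map word, hword, ?_⟩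
  have hPne : P ≠ [] := fun h => hne (List.nil_perm.1 (by simpa [h] using hword))
  obtain ⟨i, P', hP⟩ := List.exists_cons_of_ne_nil hPne
  rw [pathCost_map, hP]
  have hspan := pathCost_add_le (c := fun i j => overlapCost (word i) (word j))
    (fun i j hij => overlapCost_take_drop_le w n hij) (M := w.length - n) (hP ▸ hPsorted)
    fun j hj => by have := hPfit j (hP ▸ hj); omega
  have := hPfit i (hP ▸ List.mem_cons_self)
  omega

end Occurrences

section Permutations

def permWords (n : ℕ) : List (List (Fin n)) := (List.finRange n).permutations'

theorem mem_permWords {n : ℕ} {u : List (Fin n)} : u ∈ permWords n ↔ u ~ List.finRange n :=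
  List.mem_permutations'

theorem nodup_permWords (n : ℕ) : (permWords n).Nodup :=
  (List.permutations_perm_permutations' _).nodup_iff.1
    (List.nodup_permutations _ (List.nodup_finRange n))

theorem exists_ofFn_eq_of_perm_finRange {n : ℕ} {u : List (Fin n)} (hu : u ~ List.finRange n) :
    ∃ σ : Equiv.Perm (Fin n), List.ofFn σ = u := by
  have hlen : u.length = n := by simpa using hu.length_eq
  let f (i : Fin n) : Fin n := u[i.1]'(by rw [hlen]; exact i.2)
  have hf : f.Injective := fun i j h =>
    Fin.ext (((hu.nodup_iff.2 (List.nodup_finRange n)).getElem_inj_iff).1 h)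
  refine ⟨Equiv.ofBijective f (Finite.injective_iff_bijective.1 hf), ?_⟩
  exact List.ext_getElem (by simp [hlen]) fun k _ _ => by simp [f]

theorem length_le_of_isSuperperm {n : ℕ} {w : List (Fin n)} (hw : IsSuperperm n w) :
    n ≤ w.length := by
  simpa using (hw 1).length_le

def permPathSearch (n B : ℕ) : Bool :=
  hamiltonianPathSearch overlapCost (fun v : List (Fin n) => (v : Cycle (Fin n))) (permWords n) B

theorem add_lt_length_of_isSuperperm {n B : ℕ} {w : List (Fin n)} (hw : IsSuperperm n w)
    (hB : permPathSearch n B = false) : n + B < w.length := by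
  have hne : permWords n ≠ [] := List.ne_nil_of_mem (mem_permWords.2 (List.Perm.refl _))
  obtain ⟨l, hl, hlw⟩ := exists_perm_add_pathCost_le (nodup_permWords n) hne
    (fun u hu => by simpa using (mem_permWords.1 hu).length_eq)
    fun u hu => by
      obtain ⟨σ, rfl⟩ := exists_ofFn_eq_of_perm_finRange (mem_permWords.1 hu)
      exact hw σ
  have hrot : ∀ x ∈ permWords n, ∀ y ∈ permWords n, overlapCost x y = 1 →
      (x : Cycle (Fin n)) = y := fun x hx y hy h =>
    Cycle.coe_eq_coe.2 <| isRotated_of_overlapCost_eq_one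
      ((mem_permWords.1 hx).trans (mem_permWords.1 hy).symm)
      ((mem_permWords.1 hy).nodup_iff.2 (List.nodup_finRange n)) h
  have := lt_pathCost_of_hamiltonianPathSearch one_le_overlapCost hrot hB
    hl fun h => hne (List.nil_perm.1 (h ▸ hl))
  omega

end Permutations

theorem sInf_superpermLengths_eq {n : ℕ} (w₀ : List (Fin n)) (hw₀ : IsSuperperm n w₀)
    (hmin : ∀ w, IsSuperperm n w → w₀.length ≤ w.length) :
    sInf {k | ∃ w : List (Fin n), IsSuperperm n w ∧ w.length = k} = w₀.length :=
  le_antisymm (Nat.sInf_le ⟨w₀, hw₀, rfl⟩) <|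
    le_csInf ⟨_, w₀, hw₀, rfl⟩ fun _ ⟨w, hw, hk⟩ => hk ▸ hmin w hw

theorem isSuperperm_one : IsSuperperm 1 [0] := by
  unfold IsSuperperm; decide

theorem isSuperperm_two : IsSuperperm 2 [0, 1, 0] := by
  unfold IsSuperperm; decide

theorem isSuperperm_three : IsSuperperm 3 [0, 1, 2, 0, 1, 0, 2, 1, 0] := by
  unfold IsSuperperm; decide

theorem isSuperperm_four : IsSuperperm 4
    [0, 1, 2, 3, 0, 1, 2, 0, 3, 1, 2, 0, 1, 3, 2, 0, 1, 0, 2, 3, 1, 0, 2, 1, 3, 0, 2, 1, 0, 3, 2, 1,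
      0] := by
  unfold IsSuperperm; decide

theorem permPathSearch_two : permPathSearch 2 0 = false := by decide +kernel

theorem permPathSearch_three : permPathSearch 3 5 = false := by decide +kernel

theorem permPathSearch_four : permPathSearch 4 28 = false := by decide +kernel

theorem stmt_17 (n : ℕ) (h1 : 1 ≤ n) (h4 : n ≤ 4) :
    sInf {k | ∃ w : List (Fin n), IsSuperperm n w ∧ w.length = k} =
      ∑ i ∈ Finset.Icc 1 n, Nat.factorial i := by
  interval_cases n
  · rw [sInf_superpermLengths_eq _ isSuperperm_one fun _ => length_le_of_isSuperperm]
    rfl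
  · rw [sInf_superpermLengths_eq _ isSuperperm_two fun _ hw =>
      add_lt_length_of_isSuperperm hw permPathSearch_two]
    rfl
  · rw [sInf_superpermLengths_eq _ isSuperperm_three fun _ hw =>
      add_lt_length_of_isSuperperm hw permPathSearch_three]
    rfl
  · rw [sInf_superpermLengths_eq _ isSuperperm_four fun _ hw =>
      add_lt_length_of_isSuperperm hw permPathSearch_four]
    rfl
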